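/- arXiv:1710.09058 — 2 statements merged into one kernel-verified Lean document; each statement's English description precedes it below -/
import Mathlib

section
/- Let φ : T² → ℝ be Hölder continuous with ∫ φ dx dy = 0, and let σ̂²(φ) = ∫ φ² + 2 ∫ φ(x,z) φ(z,y) dx dy dz. Then σ̂²(φ) = 0 if and only if there exists a Hölder continuous function ψ : T¹ → ℝ such that φ(x,y) = ψ(x) − ψ(y) for all (x,y). -/
open MeasureTheory

open scoped NNReal

namespace Stmt3Aux

noncomputable section

local notation "U" => UnitAddCircle
local notation "UU" => (UnitAddCircle × UnitAddCircle)

instance : IsProbabilityMeasure (volume : Measure U) :=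
  ⟨by rw [AddCircle.measure_univ]; simp⟩

instance : IsProbabilityMeasure (volume : Measure UU) := by
  rw [Measure.volume_eq_prod]; infer_instance

lemma myInt1 {f : U → ℝ} (hf : Continuous f) : Integrable f :=
  hf.integrable_of_hasCompactSupport
    (IsCompact.of_isClosed_subset isCompact_univ (isClosed_tsupport f) (Set.subset_univ _))

lemma myInt2 {f : UU → ℝ} (hf : Continuous f) : Integrable f :=
  hf.integrable_of_hasCompactSupport
    (IsCompact.of_isClosed_subset isCompact_univ (isClosed_tsupport f) (Set.subset_univ _))

lemma myInt2' {f : UU → ℝ} (hf : Continuous f) :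
    Integrable f ((volume : Measure U).prod volume) := by
  rw [← Measure.volume_eq_prod]; exact myInt2 hf

lemma myHolder {X : Type*} [PseudoMetricSpace X] {C r : ℝ≥0} {f : X → ℝ}
    (h : ∀ x y, dist (f x) (f y) ≤ C * dist x y ^ (r : ℝ)) : HolderWith C r f := by
  intro x y
  rw [edist_dist, edist_dist, ENNReal.ofReal_rpow_of_nonneg dist_nonneg r.coe_nonneg,
    ← ENNReal.ofReal_coe_nnreal, ← ENNReal.ofReal_mul C.coe_nonneg]
  exact ENNReal.ofReal_le_ofReal (h x y)

lemma const_int : ∀ c : ℝ, (∫ _ : U, c) = c := by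
  intro c; simp

/-- Hölder continuity of the average over the first coordinate. -/
lemma avgHolderB {C r : ℝ≥0} (hr : 0 < r) {φ : UU → ℝ} (hφ : HolderWith C r φ) :
    HolderWith C r (fun y => ∫ x, φ (x, y)) := by
  have hφc : Continuous φ := hφ.continuous hr
  apply myHolder
  intro y y'
  have h1 : Integrable (fun x => φ (x, y)) := myInt1 (by fun_prop)
  have h2 : Integrable (fun x => φ (x, y')) := myInt1 (by fun_prop)
  rw [Real.dist_eq, ← integral_sub h1 h2]
  calc |∫ x, (φ (x, y) - φ (x, y'))| ≤ ∫ x, |φ (x, y) - φ (x, y')| := by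
        simpa using norm_integral_le_integral_norm (fun x => φ (x, y) - φ (x, y'))
    _ ≤ ∫ _ : U, ((C : ℝ) * dist y y' ^ (r : ℝ)) := by
        refine integral_mono (h1.sub h2).abs (integrable_const _) fun x => ?_
        calc |φ (x, y) - φ (x, y')| = dist (φ (x, y)) (φ (x, y')) := (Real.dist_eq _ _).symm
          _ ≤ C * dist ((x, y) : UU) ((x, y') : UU) ^ (r : ℝ) := hφ.dist_le _ _
          _ = C * dist y y' ^ (r : ℝ) := by
              rw [Prod.dist_eq]; simp [max_eq_right dist_nonneg]
    _ = (C : ℝ) * dist y y' ^ (r : ℝ) := const_int _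

/-- Hölder continuity of the average over the second coordinate. -/
lemma avgHolderA {C r : ℝ≥0} (hr : 0 < r) {φ : UU → ℝ} (hφ : HolderWith C r φ) :
    HolderWith C r (fun x => ∫ y, φ (x, y)) := by
  have hφc : Continuous φ := hφ.continuous hr
  apply myHolder
  intro x x'
  have h1 : Integrable (fun y => φ (x, y)) := myInt1 (by fun_prop)
  have h2 : Integrable (fun y => φ (x', y)) := myInt1 (by fun_prop)
  rw [Real.dist_eq, ← integral_sub h1 h2]
  calc |∫ y, (φ (x, y) - φ (x', y))| ≤ ∫ y, |φ (x, y) - φ (x', y)| := by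
        simpa using norm_integral_le_integral_norm (fun y => φ (x, y) - φ (x', y))
    _ ≤ ∫ _ : U, ((C : ℝ) * dist x x' ^ (r : ℝ)) := by
        refine integral_mono (h1.sub h2).abs (integrable_const _) fun y => ?_
        calc |φ (x, y) - φ (x', y)| = dist (φ (x, y)) (φ (x', y)) := (Real.dist_eq _ _).symm
          _ ≤ C * dist ((x, y) : UU) ((x', y) : UU) ^ (r : ℝ) := hφ.dist_le _ _
          _ = C * dist x x' ^ (r : ℝ) := by
              rw [Prod.dist_eq]; simp [max_eq_left dist_nonneg]
    _ = (C : ℝ) * dist x x' ^ (r : ℝ) := const_int _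

lemma integral_unfold {f : UU → ℝ} (hf : Continuous f) :
    (∫ p, f p) = ∫ x, ∫ y, f (x, y) := by
  rw [Measure.volume_eq_prod]
  exact integral_prod f (myInt2' hf)

lemma integral_swap' {f : U → U → ℝ} (hf : Continuous (fun p : UU => f p.1 p.2)) :
    (∫ x, ∫ y, f x y) = ∫ y, ∫ x, f x y :=
  integral_integral_swap (myInt2' hf)

end

end Stmt3Aux

open Stmt3Aux

theorem stmt3 (α : ℝ) (hα : 0 < α) (hα1 : α ≤ 1) (C : NNReal)
    (φ : UnitAddCircle × UnitAddCircle → ℝ)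
    (hφ : HolderWith C (Real.toNNReal α) φ)
    (hmean : ∫ p, φ p = 0) :
    ((∫ p, (φ p) ^ 2) + 2 * ∫ x, ∫ y, ∫ z, φ (x, z) * φ (z, y)) = 0 ↔
      ∃ (ψ : UnitAddCircle → ℝ) (C' : NNReal) (α' : ℝ), 0 < α' ∧ α' ≤ 1 ∧
        HolderWith C' (Real.toNNReal α') ψ ∧ ∀ x y, φ (x, y) = ψ x - ψ y := by
  have hr : (0 : NNReal) < Real.toNNReal α := Real.toNNReal_pos.mpr hα
  have hφc : Continuous φ := hφ.continuous hr
  have hAH := avgHolderA hr hφ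
  have hBH := avgHolderB hr hφ
  have hAc : Continuous (fun x : UnitAddCircle => ∫ y, φ (x, y)) := hAH.continuous hr
  have hBc : Continuous (fun y : UnitAddCircle => ∫ x, φ (x, y)) := hBH.continuous hr
  have hφc' : Continuous (fun p : UnitAddCircle × UnitAddCircle => φ (p.1, p.2)) := by
    fun_prop
  have hB0 : (∫ y, ∫ x, φ (x, y)) = 0 := by
    rw [← integral_swap' (f := fun x y => φ (x, y)) hφc', ← integral_unfold hφc]
    exact hmean
  have hGc : Continuous (fun p : UnitAddCircle × UnitAddCircle =>
      φ p + (∫ x, φ (x, p.1)) - (∫ x, φ (x, p.2))) :=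
    (hφc.add (hBc.comp continuous_fst)).sub (hBc.comp continuous_snd)
  -- triple integral computation
  have hT : (∫ x, ∫ y, ∫ z, φ (x, z) * φ (z, y))
      = ∫ z, (∫ x, φ (x, z)) * (∫ y, φ (z, y)) := by
    have h1 : ∀ x : UnitAddCircle,
        (∫ y, ∫ z, φ (x, z) * φ (z, y)) = ∫ z, φ (x, z) * (∫ y, φ (z, y)) := by
      intro x
      rw [integral_swap' (f := fun y z => φ (x, z) * φ (z, y)) (by fun_prop)]
      simp only [integral_const_mul]
    simp only [h1]
    rw [integral_swap' (f := fun x z => φ (x, z) * (∫ y, φ (z, y)))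
      (hφc'.mul (hAc.comp continuous_snd))]
    simp only [integral_mul_const]
  have c1 : Continuous (fun p : UnitAddCircle × UnitAddCircle => (φ p) ^ 2) := hφc.pow 2
  have c2 : Continuous (fun p : UnitAddCircle × UnitAddCircle => (∫ x, φ (x, p.1)) ^ 2) :=
    (hBc.comp continuous_fst).pow 2
  have c3 : Continuous (fun p : UnitAddCircle × UnitAddCircle => (∫ x, φ (x, p.2)) ^ 2) :=
    (hBc.comp continuous_snd).pow 2
  have c4 : Continuous (fun p : UnitAddCircle × UnitAddCircle => φ p * (∫ x, φ (x, p.1))) :=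
    hφc.mul (hBc.comp continuous_fst)
  have c5 : Continuous (fun p : UnitAddCircle × UnitAddCircle => φ p * (∫ x, φ (x, p.2))) :=
    hφc.mul (hBc.comp continuous_snd)
  have c6 : Continuous (fun p : UnitAddCircle × UnitAddCircle =>
      (∫ x, φ (x, p.1)) * (∫ x, φ (x, p.2))) :=
    (hBc.comp continuous_fst).mul (hBc.comp continuous_snd)
  have p2 : (∫ p : UnitAddCircle × UnitAddCircle, (∫ x, φ (x, p.1)) ^ 2)
      = ∫ y, (∫ x, φ (x, y)) ^ 2 := by
    rw [integral_unfold c2]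
    simp only [const_int]
  have p3 : (∫ p : UnitAddCircle × UnitAddCircle, (∫ x, φ (x, p.2)) ^ 2)
      = ∫ y, (∫ x, φ (x, y)) ^ 2 := by
    rw [integral_unfold c3]
    simp only [const_int]
  have p4 : (∫ p : UnitAddCircle × UnitAddCircle, φ p * (∫ x, φ (x, p.1)))
      = ∫ z, (∫ y, φ (z, y)) * (∫ x, φ (x, z)) := by
    rw [integral_unfold c4]
    simp only [integral_mul_const]
  have p5 : (∫ p : UnitAddCircle × UnitAddCircle, φ p * (∫ x, φ (x, p.2)))
      = ∫ y, (∫ x, φ (x, y)) * (∫ x, φ (x, y)) := by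
    rw [integral_unfold c5]
    rw [integral_swap' (f := fun x y => φ (x, y) * (∫ x', φ (x', y)))
      (hφc'.mul (hBc.comp continuous_snd))]
    simp only [integral_mul_const]
  have p6 : (∫ p : UnitAddCircle × UnitAddCircle, (∫ x, φ (x, p.1)) * (∫ x, φ (x, p.2))) = 0 := by
    rw [integral_unfold c6]
    simp only [integral_const_mul, hB0, mul_zero, integral_zero]
  have I1 : Integrable (fun p : UnitAddCircle × UnitAddCircle => (φ p) ^ 2) := myInt2 c1
  have I2 : Integrable (fun p : UnitAddCircle × UnitAddCircle => (∫ x, φ (x, p.1)) ^ 2) :=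
    myInt2 c2
  have I3 : Integrable (fun p : UnitAddCircle × UnitAddCircle => (∫ x, φ (x, p.2)) ^ 2) :=
    myInt2 c3
  have I4 : Integrable (fun p : UnitAddCircle × UnitAddCircle => φ p * (∫ x, φ (x, p.1))) :=
    myInt2 c4
  have I5 : Integrable (fun p : UnitAddCircle × UnitAddCircle => φ p * (∫ x, φ (x, p.2))) :=
    myInt2 c5
  have I6 : Integrable (fun p : UnitAddCircle × UnitAddCircle =>
      (∫ x, φ (x, p.1)) * (∫ x, φ (x, p.2))) := myInt2 c6
  have J12 : Integrable (fun p : UnitAddCircle × UnitAddCircle =>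
      (φ p) ^ 2 + (∫ x, φ (x, p.1)) ^ 2) := I1.add I2
  have J123 : Integrable (fun p : UnitAddCircle × UnitAddCircle =>
      (φ p) ^ 2 + (∫ x, φ (x, p.1)) ^ 2 + (∫ x, φ (x, p.2)) ^ 2) := J12.add I3
  have J4 : Integrable (fun p : UnitAddCircle × UnitAddCircle =>
      2 * (φ p * (∫ x, φ (x, p.1)))) := I4.const_mul 2
  have J5 : Integrable (fun p : UnitAddCircle × UnitAddCircle =>
      2 * (φ p * (∫ x, φ (x, p.2)))) := I5.const_mul 2
  have J6 : Integrable (fun p : UnitAddCircle × UnitAddCircle =>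
      2 * ((∫ x, φ (x, p.1)) * (∫ x, φ (x, p.2)))) := I6.const_mul 2
  have JL : Integrable (fun p : UnitAddCircle × UnitAddCircle =>
      (φ p) ^ 2 + (∫ x, φ (x, p.1)) ^ 2 + (∫ x, φ (x, p.2)) ^ 2
        + 2 * (φ p * (∫ x, φ (x, p.1)))) := J123.add J4
  have JR : Integrable (fun p : UnitAddCircle × UnitAddCircle =>
      2 * (φ p * (∫ x, φ (x, p.2))) + 2 * ((∫ x, φ (x, p.1)) * (∫ x, φ (x, p.2)))) := J5.add J6
  have s1 : (∫ p : UnitAddCircle × UnitAddCircle,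
        ((φ p) ^ 2 + (∫ x, φ (x, p.1)) ^ 2 + (∫ x, φ (x, p.2)) ^ 2
          + 2 * (φ p * (∫ x, φ (x, p.1))))
        - (2 * (φ p * (∫ x, φ (x, p.2))) + 2 * ((∫ x, φ (x, p.1)) * (∫ x, φ (x, p.2)))))
      = (∫ p : UnitAddCircle × UnitAddCircle,
          (φ p) ^ 2 + (∫ x, φ (x, p.1)) ^ 2 + (∫ x, φ (x, p.2)) ^ 2
            + 2 * (φ p * (∫ x, φ (x, p.1))))
        - ∫ p : UnitAddCircle × UnitAddCircle,
            2 * (φ p * (∫ x, φ (x, p.2))) + 2 * ((∫ x, φ (x, p.1)) * (∫ x, φ (x, p.2))) :=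
    integral_sub JL JR
  have s2 : (∫ p : UnitAddCircle × UnitAddCircle,
        (φ p) ^ 2 + (∫ x, φ (x, p.1)) ^ 2 + (∫ x, φ (x, p.2)) ^ 2
          + 2 * (φ p * (∫ x, φ (x, p.1))))
      = (∫ p : UnitAddCircle × UnitAddCircle,
          (φ p) ^ 2 + (∫ x, φ (x, p.1)) ^ 2 + (∫ x, φ (x, p.2)) ^ 2)
        + ∫ p : UnitAddCircle × UnitAddCircle, 2 * (φ p * (∫ x, φ (x, p.1))) :=
    integral_add J123 J4
  have s3 : (∫ p : UnitAddCircle × UnitAddCircle,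
        (φ p) ^ 2 + (∫ x, φ (x, p.1)) ^ 2 + (∫ x, φ (x, p.2)) ^ 2)
      = (∫ p : UnitAddCircle × UnitAddCircle, (φ p) ^ 2 + (∫ x, φ (x, p.1)) ^ 2)
        + ∫ p : UnitAddCircle × UnitAddCircle, (∫ x, φ (x, p.2)) ^ 2 :=
    integral_add J12 I3
  have s4 : (∫ p : UnitAddCircle × UnitAddCircle, (φ p) ^ 2 + (∫ x, φ (x, p.1)) ^ 2)
      = (∫ p : UnitAddCircle × UnitAddCircle, (φ p) ^ 2)
        + ∫ p : UnitAddCircle × UnitAddCircle, (∫ x, φ (x, p.1)) ^ 2 :=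
    integral_add I1 I2
  have s5 : (∫ p : UnitAddCircle × UnitAddCircle,
        2 * (φ p * (∫ x, φ (x, p.2))) + 2 * ((∫ x, φ (x, p.1)) * (∫ x, φ (x, p.2))))
      = (∫ p : UnitAddCircle × UnitAddCircle, 2 * (φ p * (∫ x, φ (x, p.2))))
        + ∫ p : UnitAddCircle × UnitAddCircle,
            2 * ((∫ x, φ (x, p.1)) * (∫ x, φ (x, p.2))) :=
    integral_add J5 J6
  have split : (∫ p : UnitAddCircle × UnitAddCircle,
        (φ p + (∫ x, φ (x, p.1)) - (∫ x, φ (x, p.2))) ^ 2)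
      = (∫ p : UnitAddCircle × UnitAddCircle, (φ p) ^ 2)
        + (∫ p : UnitAddCircle × UnitAddCircle, (∫ x, φ (x, p.1)) ^ 2)
        + (∫ p : UnitAddCircle × UnitAddCircle, (∫ x, φ (x, p.2)) ^ 2)
        + 2 * (∫ p : UnitAddCircle × UnitAddCircle, φ p * (∫ x, φ (x, p.1)))
        - 2 * (∫ p : UnitAddCircle × UnitAddCircle, φ p * (∫ x, φ (x, p.2)))
        - 2 * (∫ p : UnitAddCircle × UnitAddCircle, (∫ x, φ (x, p.1)) * (∫ x, φ (x, p.2))) := by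
    have hre : (fun p : UnitAddCircle × UnitAddCircle =>
          (φ p + (∫ x, φ (x, p.1)) - (∫ x, φ (x, p.2))) ^ 2)
        = fun p : UnitAddCircle × UnitAddCircle =>
            ((φ p) ^ 2 + (∫ x, φ (x, p.1)) ^ 2 + (∫ x, φ (x, p.2)) ^ 2
              + 2 * (φ p * (∫ x, φ (x, p.1))))
            - (2 * (φ p * (∫ x, φ (x, p.2))) + 2 * ((∫ x, φ (x, p.1)) * (∫ x, φ (x, p.2)))) :=
      funext fun p => by ring
    rw [hre, s1, s2, s3, s4, s5]
    simp only [integral_const_mul]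
    ring
  have sqmul : (∫ y, (∫ x, φ (x, y)) * (∫ x, φ (x, y))) = ∫ y, (∫ x, φ (x, y)) ^ 2 :=
    integral_congr_ae (Filter.Eventually.of_forall fun y => (sq (∫ x, φ (x, y))).symm)
  have hswap4 : (∫ z, (∫ x, φ (x, z)) * (∫ y, φ (z, y)))
      = ∫ z, (∫ y, φ (z, y)) * (∫ x, φ (x, z)) :=
    integral_congr_ae (Filter.Eventually.of_forall fun z => mul_comm _ _)
  have key : ((∫ p, (φ p) ^ 2) + 2 * ∫ x, ∫ y, ∫ z, φ (x, z) * φ (z, y))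
      = ∫ p : UnitAddCircle × UnitAddCircle,
          (φ p + (∫ x, φ (x, p.1)) - (∫ x, φ (x, p.2))) ^ 2 := by
    rw [hT, hswap4, split, p2, p3, p4, p5, p6, sqmul]
    ring
  rw [key]
  constructor
  · intro h0
    have hae := (integral_eq_zero_iff_of_nonneg (fun p => sq_nonneg _)
      (myInt2 (hGc.pow 2))).mp h0
    have heq : (fun p : UnitAddCircle × UnitAddCircle =>
        (φ p + (∫ x, φ (x, p.1)) - (∫ x, φ (x, p.2))) ^ 2) = fun _ => (0 : ℝ) :=
      (Continuous.ae_eq_iff_eq volume (hGc.pow 2) continuous_const).mp hae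
    refine ⟨fun x => -(∫ x', φ (x', x)), C, α, hα, hα1, ?_, ?_⟩
    · apply myHolder
      intro x y
      have h := hBH.dist_le x y
      rw [Real.dist_eq] at h ⊢
      calc |(-(∫ x', φ (x', x))) - (-(∫ x', φ (x', y)))|
          = |(∫ x', φ (x', x)) - (∫ x', φ (x', y))| := by rw [neg_sub_neg, abs_sub_comm]
        _ ≤ C * dist x y ^ ((Real.toNNReal α : ℝ≥0) : ℝ) := h
    · intro x y
      have h : (φ (x, y) + (∫ x', φ (x', x)) - (∫ x', φ (x', y))) ^ 2 = 0 :=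
        congrFun heq (x, y)
      have h2 : φ (x, y) + (∫ x', φ (x', x)) - (∫ x', φ (x', y)) = 0 :=
        pow_eq_zero_iff (two_ne_zero) |>.mp h
      show φ (x, y) = (-(∫ x', φ (x', x))) - (-(∫ x', φ (x', y)))
      linarith
  · rintro ⟨ψ, C', α', hα'0, hα'1, hψH, hψeq⟩
    have hψc : Continuous ψ := hψH.continuous (Real.toNNReal_pos.mpr hα'0)
    have hbψ : ∀ y : UnitAddCircle, (∫ x, φ (x, y)) = (∫ x, ψ x) - ψ y := by
      intro y
      have : (fun x : UnitAddCircle => φ (x, y)) = fun x => ψ x - ψ y :=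
        funext fun x => hψeq x y
      rw [this, integral_sub (myInt1 hψc) (integrable_const _), const_int]
    have hzero : (fun p : UnitAddCircle × UnitAddCircle =>
        (φ p + (∫ x, φ (x, p.1)) - (∫ x, φ (x, p.2))) ^ 2) = fun _ => (0 : ℝ) := by
      funext p
      obtain ⟨x, y⟩ := p
      show (φ (x, y) + (∫ x', φ (x', x)) - (∫ x', φ (x', y))) ^ 2 = 0
      rw [hψeq, hbψ, hbψ]
      ring
    rw [hzero]
    exact integral_zero _ _
end

section
/- Let F(x,y) = (f(x) − y mod 1, x) on T², and suppose at a point p = (x,y) one has |f'(x)| ≥ 2L with L ≥ 10. Then the derivative dF_p maps the horizontal cone C_h = { (v_x, v_y) : |v_y| ≤ (1/10)|v_x| } into itself, and every vector v ∈ C_h satisfies ‖dF_p v‖ ≥ (L/4)‖v‖. -/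
theorem stmt19 (L a vx vy : ℝ) (hL : 10 ≤ L) (ha : 2 * L ≤ |a|)
    (hv : |vy| ≤ |vx| / 10) :
    |vx| ≤ |a * vx - vy| / 10 ∧
    (L / 4) * Real.sqrt (vx ^ 2 + vy ^ 2)
      ≤ Real.sqrt ((a * vx - vy) ^ 2 + vx ^ 2) := by
  have hvx : 0 ≤ |vx| := abs_nonneg vx
  have h1 : |a * vx| - |vy| ≤ |a * vx - vy| := abs_sub_abs_le_abs_sub _ _
  have h2 : |a * vx| = |a| * |vx| := abs_mul a vx
  have hkey : (2 * L - 1/10) * |vx| ≤ |a * vx - vy| := by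
    nlinarith [mul_le_mul_of_nonneg_right ha hvx]
  constructor
  · nlinarith
  · have hs : (L / 4) * Real.sqrt (vx ^ 2 + vy ^ 2)
        = Real.sqrt ((L/4)^2 * (vx ^ 2 + vy ^ 2)) := by
      rw [Real.sqrt_mul (by positivity), Real.sqrt_sq (by linarith)]
    rw [hs]
    apply Real.sqrt_le_sqrt
    have hvy2 : vy ^ 2 ≤ vx ^ 2 / 100 := by
      nlinarith [sq_abs vy, sq_abs vx, abs_nonneg vy]
    have hA : ((2 * L - 1/10) * |vx|) ^ 2 ≤ (a * vx - vy) ^ 2 := by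
      have := sq_abs (a * vx - vy)
      nlinarith [mul_nonneg (by linarith : (0:ℝ) ≤ 2 * L - 1/10) hvx, abs_nonneg (a * vx - vy)]
    have hx2 : |vx| ^ 2 = vx ^ 2 := sq_abs vx
    nlinarith [mul_nonneg (by linarith : (0:ℝ) ≤ L - 10) (sq_nonneg vx), mul_nonneg (mul_nonneg (by linarith : (0:ℝ) ≤ L) (by linarith : (0:ℝ) ≤ L - 10)) (sq_nonneg vx)]
end
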